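/- arXiv:0811.1108 — 2 statements merged into one kernel-verified Lean document; each statement's English description precedes it below -/
import Mathlib

section
/- Define C(x) := E[log(1+f^{−1}(x)·Z)] for x ≥ 0, where Z is standard exponential and f^{−1} is the inverse of f(x) = E[log(1+xZ)]/E[Z/(1+xZ)] − x. Then C is continuous, strictly increasing on [0,∞), with C(0) = 0 and C(x) → +∞ as x → +∞. -/
open MeasureTheory Set Filter

/-- f(x) = E[log(1+xZ)]/E[Z/(1+xZ)] − x for Z standard exponential. -/
noncomputable def waterfill (x : ℝ) : ℝ :=
  (∫ z in Ioi (0:ℝ), Real.log (1 + x * z) * Real.exp (-z)) /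
    (∫ z in Ioi (0:ℝ), (z / (1 + x * z)) * Real.exp (-z)) - x

/-!
Write `L t = E[log (1 + t Z)]` and `D t = E[Z / (1 + t Z)]`, so that `f = L / D - id`. `L` is
continuous, strictly increasing and unbounded with `L 0 = 0`, and `D` is positive and strictly
decreasing. Since `L` is concave with `L' = D`, the tangent bound `L a + (b - a) D b < L b` holds
for `a < b`; with `D b < D a` it makes `f` strictly increasing on `[0, ∞)`, and `f 0 = 0`. Being
injective, `f` has its right inverse `f⁻¹` as a two-sided inverse, so `f⁻¹` is a strictly
increasing bijection of `[0, ∞)`, hence continuous and unbounded, and `C = L ∘ f⁻¹` inherits all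
four properties from `L`.
-/

open Real

section MonotoneOnIci

variable {α β : Type*} [LinearOrder α] [LinearOrder β] {g : α → β} {a : α}

theorem MonotoneOn.tendsto_atTop_of_image_Ici_eq (hg : MonotoneOn g (Ici a))
    (himg : g '' Ici a = Ici (g a)) : Tendsto g atTop atTop := by
  refine tendsto_atTop.2 fun b => ?_
  obtain ⟨x, hx, hgx⟩ : max b (g a) ∈ g '' Ici a := himg ▸ le_max_right b (g a)
  filter_upwards [eventually_ge_atTop x] with y hxy
  calc b ≤ g x := hgx ▸ le_max_left b (g a)
    _ ≤ g y := hg hx (mem_Ici.2 (le_trans hx hxy)) hxy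

theorem StrictMonoOn.continuousOn_Ici_of_image_Ici_eq [TopologicalSpace α] [OrderTopology α]
    [TopologicalSpace β] [OrderTopology β] [DenselyOrdered β] (hg : StrictMonoOn g (Ici a))
    (himg : g '' Ici a = Ici (g a)) : ContinuousOn g (Ici a) := by
  intro x hx
  rcases (mem_Ici.1 hx).eq_or_lt with rfl | hax
  · exact hg.continuousWithinAt_right_of_image_mem_nhdsWithin self_mem_nhdsWithin
      (himg ▸ self_mem_nhdsWithin)
  · exact (hg.continuousAt_of_image_mem_nhds (Ici_mem_nhds hax)
      (himg ▸ Ici_mem_nhds (hg self_mem_Ici hx hax))).continuousWithinAt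

end MonotoneOnIci

theorem StrictMonoOn.strictMonoOn_of_leftInvOn {α β : Type*} [LinearOrder α] [Preorder β]
    {f : α → β} {g : β → α} {s : Set α} {t : Set β} (hf : StrictMonoOn f s) (hg : MapsTo g t s)
    (hfg : LeftInvOn f g t) : StrictMonoOn g t := fun x hx y hy hxy =>
  (hf.lt_iff_lt (hg hx) (hg hy)).1 (by rwa [hfg hx, hfg hy])

theorem setIntegral_lt_setIntegral_of_forall_lt {X : Type*} [MeasurableSpace X] {μ : Measure X}
    {s : Set X} {f g : X → ℝ} (hs : MeasurableSet s) (hμs : μ s ≠ 0) (hf : IntegrableOn f s μ)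
    (hg : IntegrableOn g s μ) (hlt : ∀ x ∈ s, f x < g x) :
    ∫ x in s, f x ∂μ < ∫ x in s, g x ∂μ := by
  rw [← sub_pos, ← integral_sub hg hf, setIntegral_pos_iff_support_of_nonneg_ae
    ((ae_restrict_iff' hs).2 (.of_forall fun x hx => sub_nonneg.2 (hlt x hx).le)) (hg.sub hf)]
  have hsupp : (Function.support fun x => g x - f x) ∩ s = s :=
    inter_eq_right.2 fun x hx => sub_ne_zero.2 (hlt x hx).ne'
  rwa [hsupp, pos_iff_ne_zero]

noncomputable def logMean (t : ℝ) : ℝ := ∫ z in Ioi (0:ℝ), log (1 + t * z) * exp (-z)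

noncomputable def ratioMean (t : ℝ) : ℝ := ∫ z in Ioi (0:ℝ), z / (1 + t * z) * exp (-z)

theorem waterfill_eq_logMean_div_ratioMean (x : ℝ) : waterfill x = logMean x / ratioMean x - x :=
  rfl

section Integrands

variable {t z : ℝ}

theorem one_add_mul_pos (ht : 0 ≤ t) (hz : 0 < z) : 0 < 1 + t * z := by positivity

theorem log_one_add_mul_nonneg (ht : 0 ≤ t) (hz : 0 < z) : 0 ≤ log (1 + t * z) :=
  log_nonneg (by nlinarith [mul_nonneg ht hz.le])

theorem log_one_add_mul_le (ht : 0 ≤ t) (hz : 0 < z) : log (1 + t * z) ≤ t * z := by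
  linarith [log_le_sub_one_of_pos (one_add_mul_pos ht hz)]

theorem integrableOn_mul_exp_neg : IntegrableOn (fun z : ℝ => z * exp (-z)) (Ioi 0) :=
  (GammaIntegral_convergent (s := 2) (by norm_num)).congr_fun
    (fun z _ => by norm_num [mul_comm]) measurableSet_Ioi

theorem integrableOn_logMean_integrand (ht : 0 ≤ t) :
    IntegrableOn (fun z => log (1 + t * z) * exp (-z)) (Ioi 0) := by
  refine (integrableOn_mul_exp_neg.const_mul t).mono' (by fun_prop)
    ((ae_restrict_iff' measurableSet_Ioi).2 (.of_forall fun z hz => ?_))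
  rw [norm_of_nonneg (mul_nonneg (log_one_add_mul_nonneg ht hz) (exp_pos _).le), ← mul_assoc]
  exact mul_le_mul_of_nonneg_right (log_one_add_mul_le ht hz) (exp_pos _).le

theorem integrableOn_ratioMean_integrand (ht : 0 ≤ t) :
    IntegrableOn (fun z => z / (1 + t * z) * exp (-z)) (Ioi 0) := by
  refine integrableOn_mul_exp_neg.mono' (by fun_prop)
    ((ae_restrict_iff' measurableSet_Ioi).2 (.of_forall fun z (hz : 0 < z) => ?_))
  have h1 := one_add_mul_pos ht hz
  rw [norm_of_nonneg (by positivity)]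
  refine mul_le_mul_of_nonneg_right (div_le_self hz.le ?_) (exp_pos _).le
  nlinarith [mul_nonneg ht hz.le]

end Integrands

theorem setIntegral_Ioi_lt_of_forall_lt {f g : ℝ → ℝ} (hf : IntegrableOn f (Ioi 0))
    (hg : IntegrableOn g (Ioi 0)) (hlt : ∀ z ∈ Ioi (0:ℝ), f z < g z) :
    ∫ z in Ioi (0:ℝ), f z < ∫ z in Ioi (0:ℝ), g z :=
  setIntegral_lt_setIntegral_of_forall_lt measurableSet_Ioi (by simp) hf hg hlt

theorem logMean_zero : logMean 0 = 0 := by simp [logMean]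

theorem ratioMean_pos {t : ℝ} (ht : 0 ≤ t) : 0 < ratioMean t := by
  simpa [ratioMean] using setIntegral_Ioi_lt_of_forall_lt integrableOn_zero
    (integrableOn_ratioMean_integrand ht) fun z (hz : 0 < z) =>
      mul_pos (div_pos hz (one_add_mul_pos ht hz)) (exp_pos _)

theorem logMean_strictMonoOn : StrictMonoOn logMean (Ici 0) := by
  intro a (ha : 0 ≤ a) b (hb : 0 ≤ b) hab
  refine setIntegral_Ioi_lt_of_forall_lt (integrableOn_logMean_integrand ha)
    (integrableOn_logMean_integrand hb) fun z (hz : 0 < z) =>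
      mul_lt_mul_of_pos_right ?_ (exp_pos _)
  exact log_lt_log (one_add_mul_pos ha hz) (by nlinarith)

theorem ratioMean_strictAntiOn : StrictAntiOn ratioMean (Ici 0) := by
  intro a (ha : 0 ≤ a) b (hb : 0 ≤ b) hab
  refine setIntegral_Ioi_lt_of_forall_lt (integrableOn_ratioMean_integrand hb)
    (integrableOn_ratioMean_integrand ha) fun z (hz : 0 < z) =>
      mul_lt_mul_of_pos_right ?_ (exp_pos _)
  exact div_lt_div_of_pos_left hz (one_add_mul_pos ha hz) (by nlinarith)

theorem logMean_add_mul_ratioMean_lt {a b : ℝ} (ha : 0 ≤ a) (hab : a < b) :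
    logMean a + (b - a) * ratioMean b < logMean b := by
  have hb : 0 ≤ b := ha.trans hab.le
  have hLa := integrableOn_logMean_integrand ha
  have hDb := (integrableOn_ratioMean_integrand hb).const_mul (b - a)
  rw [logMean, ratioMean, ← integral_const_mul, ← integral_add hLa hDb]
  refine setIntegral_Ioi_lt_of_forall_lt (hLa.add hDb) (integrableOn_logMean_integrand hb)
    fun z (hz : 0 < z) => ?_
  have h1 := one_add_mul_pos ha hz
  have h2 := one_add_mul_pos hb hz
  have hlog := log_lt_sub_one_of_pos (div_pos h1 h2) (div_ne_one_of_ne (by nlinarith))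
  rw [log_div h1.ne' h2.ne'] at hlog
  have hdiv : (1 + a * z) / (1 + b * z) - 1 = -((b - a) * (z / (1 + b * z))) := by
    field_simp; ring
  have key : log (1 + a * z) + (b - a) * (z / (1 + b * z)) < log (1 + b * z) := by linarith
  linarith [mul_lt_mul_of_pos_right key (exp_pos (-z))]

theorem waterfill_strictMonoOn : StrictMonoOn waterfill (Ici 0) := by
  intro a (ha : 0 ≤ a) b (hb : 0 ≤ b) hab
  have hDb := ratioMean_pos hb
  have hLa : 0 ≤ logMean a := logMean_zero ▸ logMean_strictMonoOn.monotoneOn self_mem_Ici ha ha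
  rw [waterfill_eq_logMean_div_ratioMean, waterfill_eq_logMean_div_ratioMean]
  calc logMean a / ratioMean a - a ≤ logMean a / ratioMean b - a := by
        gcongr
        exact (ratioMean_strictAntiOn ha hb hab).le
    _ = (logMean a + (b - a) * ratioMean b) / ratioMean b - b := by field_simp; ring
    _ < logMean b / ratioMean b - b := by
        gcongr
        exact logMean_add_mul_ratioMean_lt ha hab

theorem waterfill_zero : waterfill 0 = 0 := by simp [waterfill]

theorem mapsTo_waterfill_Ici : MapsTo waterfill (Ici 0) (Ici 0) := fun _ hx =>
  waterfill_zero ▸ waterfill_strictMonoOn.monotoneOn self_mem_Ici hx hx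

theorem logMean_continuousOn : ContinuousOn logMean (Ici 0) := by
  intro t₀ (ht₀ : 0 ≤ t₀)
  refine continuousWithinAt_of_dominated (bound := fun z => log (1 + (t₀ + 1) * z) * exp (-z))
    (.of_forall fun t => by fun_prop) ?_ (integrableOn_logMean_integrand (by linarith)) ?_
  · filter_upwards [self_mem_nhdsWithin, nhdsWithin_le_nhds (Iic_mem_nhds (lt_add_one t₀))]
      with t (ht : 0 ≤ t) (htle : t ≤ t₀ + 1)
    refine (ae_restrict_iff' measurableSet_Ioi).2 (.of_forall fun z (hz : 0 < z) => ?_)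
    rw [norm_of_nonneg (mul_nonneg (log_one_add_mul_nonneg ht hz) (exp_pos _).le)]
    refine mul_le_mul_of_nonneg_right (log_le_log (one_add_mul_pos ht hz) ?_) (exp_pos _).le
    nlinarith
  · refine (ae_restrict_iff' measurableSet_Ioi).2 (.of_forall fun z (hz : 0 < z) => ?_)
    exact ((continuousAt_const.add (continuousAt_id.mul continuousAt_const)).log
      (one_add_mul_pos ht₀ hz).ne').mul continuousAt_const |>.continuousWithinAt

theorem tendsto_logMean_atTop : Tendsto logMean atTop atTop := by
  refine tendsto_atTop_mono' atTop ?_ <| (tendsto_log_atTop.comp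
    (tendsto_atTop_add_const_left atTop 1 tendsto_id)).atTop_mul_const (exp_pos (-1))
  filter_upwards [eventually_ge_atTop (0:ℝ)] with t (ht : 0 ≤ t)
  calc log (1 + t) * exp (-1) = ∫ z in Ioi (1:ℝ), log (1 + t) * exp (-z) := by
        rw [integral_const_mul, integral_exp_neg_Ioi]
    _ ≤ ∫ z in Ioi (1:ℝ), log (1 + t * z) * exp (-z) := by
        refine setIntegral_mono_on ((integrableOn_exp_neg_Ioi 1).const_mul _)
          ((integrableOn_logMean_integrand ht).mono_set (Ioi_subset_Ioi zero_le_one))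
          measurableSet_Ioi
          fun z (hz : 1 < z) => mul_le_mul_of_nonneg_right ?_ (exp_pos _).le
        exact log_le_log (by linarith) (by nlinarith)
    _ ≤ logMean t := setIntegral_mono_set (integrableOn_logMean_integrand ht)
        ((ae_restrict_iff' measurableSet_Ioi).2 (.of_forall fun z (hz : 0 < z) =>
          mul_nonneg (log_one_add_mul_nonneg ht hz) (exp_pos _).le))
        (Ioi_subset_Ioi zero_le_one).eventuallyLE

theorem C_strictMono_general (finv : ℝ → ℝ)
    (hmem : ∀ y ∈ Ici (0:ℝ), finv y ∈ Ici (0:ℝ))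
    (hright : ∀ y ∈ Ici (0:ℝ), waterfill (finv y) = y) :
    ContinuousOn
      (fun x : ℝ => ∫ z in Ioi (0:ℝ), Real.log (1 + finv x * z) * Real.exp (-z)) (Ici 0) ∧
    StrictMonoOn
      (fun x : ℝ => ∫ z in Ioi (0:ℝ), Real.log (1 + finv x * z) * Real.exp (-z)) (Ici 0) ∧
    (∫ z in Ioi (0:ℝ), Real.log (1 + finv 0 * z) * Real.exp (-z)) = 0 ∧
    Tendsto (fun x : ℝ => ∫ z in Ioi (0:ℝ), Real.log (1 + finv x * z) * Real.exp (-z))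
      atTop atTop := by
  have hleft : LeftInvOn finv waterfill (Ici 0) :=
    waterfill_strictMonoOn.injOn.rightInvOn_of_leftInvOn hright mapsTo_waterfill_Ici hmem
  have hfinv_zero : finv 0 = 0 := by simpa [waterfill_zero] using hleft (self_mem_Ici (a := 0))
  have himg : finv '' Ici 0 = Ici (finv 0) := by
    rw [hfinv_zero, (hleft.surjOn mapsTo_waterfill_Ici).image_eq_of_mapsTo hmem]
  have hfinv : StrictMonoOn finv (Ici 0) :=
    waterfill_strictMonoOn.strictMonoOn_of_leftInvOn hmem hright
  exact ⟨logMean_continuousOn.comp (hfinv.continuousOn_Ici_of_image_Ici_eq himg) hmem,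
    logMean_strictMonoOn.comp hfinv hmem, by rw [hfinv_zero]; exact logMean_zero,
    tendsto_logMean_atTop.comp (hfinv.monotoneOn.tendsto_atTop_of_image_Ici_eq himg)⟩

theorem C_strictMono (finv : ℝ → ℝ)
    (hmem : ∀ y ∈ Ici (0:ℝ), finv y ∈ Ici (0:ℝ))
    (hleft : ∀ x ∈ Ici (0:ℝ), finv (waterfill x) = x)
    (hright : ∀ y ∈ Ici (0:ℝ), waterfill (finv y) = y) :
    ContinuousOn
      (fun x : ℝ => ∫ z in Ioi (0:ℝ), Real.log (1 + finv x * z) * Real.exp (-z)) (Ici 0) ∧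
    StrictMonoOn
      (fun x : ℝ => ∫ z in Ioi (0:ℝ), Real.log (1 + finv x * z) * Real.exp (-z)) (Ici 0) ∧
    (∫ z in Ioi (0:ℝ), Real.log (1 + finv 0 * z) * Real.exp (-z)) = 0 ∧
    Tendsto (fun x : ℝ => ∫ z in Ioi (0:ℝ), Real.log (1 + finv x * z) * Real.exp (-z))
      atTop atTop :=
  C_strictMono_general finv hmem hright
end

section
/- For every g > 0 and Z standard exponential, the function (γ, W) ↦ γ·∫₀^∞ log(1 + g·(W/γ)·z)·e^{−z} dz is jointly concave and nondecreasing in each variable on {(γ,W) : γ > 0, W ≥ 0}. -/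
/-!
For a fixed realisation `z ≥ 0` the map `c ↦ log (1 + c z)` is concave and nondecreasing on
`c ≥ 0`, hence so is its mean `F c` (`expectedLogOneAddMul`) against the exponential density.
The capacity is the perspective `γ F (g W / γ)` of the concave function `x ↦ F (g x)`, so it is
jointly concave. Monotonicity in `γ` is concavity once more, now against the point `0` where
`F 0 = 0`: for `γ₁ ≤ γ₂`, `(γ₁/γ₂) F (gW/γ₁) + (1 - γ₁/γ₂) F 0 ≤ F (gW/γ₂)`.
-/

open Set MeasureTheory Real

section Perspective

variable {E : Type*} [AddCommGroup E] [Module ℝ E] {s : Set E} {f : E → ℝ}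

lemma inv_smul_convexCombination {t u a b : ℝ} (ht : 0 < t) (hu : 0 < u)
    (ha : 0 ≤ a) (hb : 0 ≤ b) (hab : a + b = 1) (x y : E) :
    0 < a * t + b * u ∧
      (a * t + b * u)⁻¹ • (a • x + b • y) =
        (a * t / (a * t + b * u)) • (t⁻¹ • x) + (b * u / (a * t + b * u)) • (u⁻¹ • y) := by
  have hpos : 0 < a * t + b * u := by
    rcases ha.eq_or_lt with rfl | ha
    · simp_all
    · positivity
  refine ⟨hpos, ?_⟩
  simp only [smul_smul, smul_add]
  congr 2 <;> field_simp

lemma convex_perspectiveDomain (hs : Convex ℝ s) :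
    Convex ℝ {p : ℝ × E | 0 < p.1 ∧ p.1⁻¹ • p.2 ∈ s} := by
  rintro ⟨t, x⟩ ⟨ht, hx⟩ ⟨u, y⟩ ⟨hu, hy⟩ a b ha hb hab
  obtain ⟨hpos, hcomb⟩ := inv_smul_convexCombination ht hu ha hb hab x y
  refine ⟨hpos, ?_⟩
  simp only [Prod.fst_add, Prod.snd_add, Prod.smul_fst, Prod.smul_snd, smul_eq_mul, hcomb]
  exact hs hx hy (by positivity) (by positivity) (by field_simp)

theorem ConcaveOn.perspective (hf : ConcaveOn ℝ s f) :
    ConcaveOn ℝ {p : ℝ × E | 0 < p.1 ∧ p.1⁻¹ • p.2 ∈ s} (fun p => p.1 * f (p.1⁻¹ • p.2)) := by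
  refine ⟨convex_perspectiveDomain hf.1, ?_⟩
  rintro ⟨t, x⟩ ⟨ht, hx⟩ ⟨u, y⟩ ⟨hu, hy⟩ a b ha hb hab
  dsimp only at ht hx hu hy
  obtain ⟨hpos, hcomb⟩ := inv_smul_convexCombination ht hu ha hb hab x y
  simp only [Prod.fst_add, Prod.snd_add, Prod.smul_fst, Prod.smul_snd, smul_eq_mul, hcomb]
  have hw : a * t / (a * t + b * u) + b * u / (a * t + b * u) = 1 := by field_simp
  set v := a * t + b * u
  calc a * (t * f (t⁻¹ • x)) + b * (u * f (u⁻¹ • y))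
      = v * ((a * t / v) • f (t⁻¹ • x) + (b * u / v) • f (u⁻¹ • y)) := by
        simp only [smul_eq_mul]; field_simp
    _ ≤ v * f ((a * t / v) • (t⁻¹ • x) + (b * u / v) • (u⁻¹ • y)) := by
        gcongr
        exact hf.2 hx hy (by positivity) (by positivity) hw

theorem ConcaveOn.monotoneOn_perspective (hf : ConcaveOn ℝ s f) (h0 : 0 ∈ s) (hf0 : 0 ≤ f 0)
    (x : E) : MonotoneOn (fun t : ℝ => t * f (t⁻¹ • x)) {t | 0 < t ∧ t⁻¹ • x ∈ s} := by
  rintro t ⟨ht, hx⟩ u ⟨hu, -⟩ htu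
  have hθ : 0 ≤ 1 - t / u := by rw [sub_nonneg, div_le_one hu]; exact htu
  have hconc := hf.2 hx h0 (div_nonneg ht.le hu.le) hθ (add_sub_cancel _ _)
  have hpt : (t / u) • t⁻¹ • x = u⁻¹ • x := by rw [smul_smul]; field_simp
  rw [smul_zero, add_zero, hpt, smul_eq_mul, smul_eq_mul] at hconc
  calc t * f (t⁻¹ • x) ≤ t * f (t⁻¹ • x) + (u - t) * f 0 :=
        le_add_of_nonneg_right (mul_nonneg (sub_nonneg.2 htu) hf0)
    _ = u * (t / u * f (t⁻¹ • x) + (1 - t / u) * f 0) := by field_simp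
    _ ≤ u * f (u⁻¹ • x) := by gcongr

end Perspective

lemma ConcaveOn.comp_const_mul_Ici {f : ℝ → ℝ} (hf : ConcaveOn ℝ (Ici 0) f) {g : ℝ} (hg : 0 ≤ g) :
    ConcaveOn ℝ (Ici 0) (fun x => f (g * x)) :=
  (hf.comp_linearMap (LinearMap.mul ℝ ℝ g)).subset (fun _ hx => mul_nonneg hg hx) (convex_Ici 0)

section ParametricIntegral

variable {α : Type*} [MeasurableSpace α] {μ : Measure α}

theorem concaveOn_integral {E : Type*} [AddCommGroup E] [Module ℝ E] {s : Set E}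
    {φ : E → α → ℝ} (hs : Convex ℝ s) (hφ : ∀ᵐ z ∂μ, ConcaveOn ℝ s (φ · z))
    (hint : ∀ x ∈ s, Integrable (φ x) μ) : ConcaveOn ℝ s (fun x => ∫ z, φ x z ∂μ) := by
  refine ⟨hs, fun x hx y hy a b ha hb hab => ?_⟩
  simp only [smul_eq_mul]
  rw [← integral_const_mul, ← integral_const_mul,
    ← integral_add ((hint x hx).const_mul a) ((hint y hy).const_mul b)]
  refine integral_mono_ae (((hint x hx).const_mul a).add ((hint y hy).const_mul b))
    (hint _ (hs hx hy ha hb hab)) ?_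
  filter_upwards [hφ] with z hz
  exact hz.2 hx hy ha hb hab

theorem monotoneOn_integral {β : Type*} [Preorder β] {s : Set β} {φ : β → α → ℝ}
    (hφ : ∀ᵐ z ∂μ, MonotoneOn (φ · z) s) (hint : ∀ x ∈ s, Integrable (φ x) μ) :
    MonotoneOn (fun x => ∫ z, φ x z ∂μ) s :=
  fun x hx y hy hxy => integral_mono_ae (hint x hx) (hint y hy) <| by
    filter_upwards [hφ] with z hz using hz hx hy hxy

end ParametricIntegral

lemma concaveOn_log_one_add_mul {z : ℝ} (hz : 0 ≤ z) :
    ConcaveOn ℝ (Ici 0) (fun c => log (1 + c * z)) := by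
  refine ⟨convex_Ici 0, fun c (hc : 0 ≤ c) d (hd : 0 ≤ d) a b ha hb hab => ?_⟩
  have hlog := strictConcaveOn_log_Ioi.concaveOn.2 (x := 1 + c * z) (y := 1 + d * z)
    (mem_Ioi.2 (by positivity)) (mem_Ioi.2 (by positivity)) ha hb hab
  convert hlog using 2
  simp only [smul_eq_mul]
  linear_combination -hab

lemma monotoneOn_log_one_add_mul {z : ℝ} (hz : 0 ≤ z) :
    MonotoneOn (fun c => log (1 + c * z)) (Ici 0) := fun c (hc : 0 ≤ c) d _ hcd =>
  log_le_log (by positivity) (by gcongr)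

lemma integrableOn_log_one_add_mul_mul_exp_neg {c : ℝ} (hc : 0 ≤ c) :
    IntegrableOn (fun z => log (1 + c * z) * exp (-z)) (Ioi 0) := by
  have hmom : IntegrableOn (fun z => c * (exp (-z) * z ^ ((2 : ℝ) - 1))) (Ioi 0) :=
    (GammaIntegral_convergent two_pos).const_mul c
  refine hmom.mono' (by fun_prop) ?_
  filter_upwards [ae_restrict_mem measurableSet_Ioi] with z (hz : 0 < z)
  have hlog : log (1 + c * z) ≤ c * z := by
    linarith [log_le_sub_one_of_pos (show 0 < 1 + c * z by positivity)]
  rw [norm_mul, norm_of_nonneg (log_nonneg (by simp; positivity)), norm_of_nonneg (exp_nonneg _)]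
  calc log (1 + c * z) * exp (-z) ≤ c * z * exp (-z) := by gcongr
    _ = _ := by norm_num; ring

noncomputable def expectedLogOneAddMul (c : ℝ) : ℝ :=
  ∫ z in Ioi 0, log (1 + c * z) * exp (-z)

lemma concaveOn_expectedLogOneAddMul : ConcaveOn ℝ (Ici 0) expectedLogOneAddMul := by
  refine concaveOn_integral (convex_Ici 0) ?_
    fun c hc => integrableOn_log_one_add_mul_mul_exp_neg hc
  filter_upwards [ae_restrict_mem measurableSet_Ioi] with z (hz : 0 < z)
  simpa only [smul_eq_mul, mul_comm] using (concaveOn_log_one_add_mul hz.le).smul (exp_nonneg (-z))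

lemma monotoneOn_expectedLogOneAddMul : MonotoneOn expectedLogOneAddMul (Ici 0) := by
  refine monotoneOn_integral ?_ fun c hc => integrableOn_log_one_add_mul_mul_exp_neg hc
  filter_upwards [ae_restrict_mem measurableSet_Ioi] with z (hz : 0 < z)
  exact fun c hc d hd hcd =>
    mul_le_mul_of_nonneg_right (monotoneOn_log_one_add_mul hz.le hc hd hcd) (exp_nonneg _)

theorem ergodic_capacity_jointly_concave (g : ℝ) (hg : 0 < g) :
    ConcaveOn ℝ {p : ℝ × ℝ | 0 < p.1 ∧ 0 ≤ p.2}
      (fun p : ℝ × ℝ =>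
        p.1 * ∫ z in Ioi (0:ℝ), Real.log (1 + g * (p.2 / p.1) * z) * Real.exp (-z)) ∧
    (∀ W : ℝ, 0 ≤ W → MonotoneOn
      (fun γ : ℝ => γ * ∫ z in Ioi (0:ℝ), Real.log (1 + g * (W / γ) * z) * Real.exp (-z))
      (Ioi 0)) ∧
    (∀ γ : ℝ, 0 < γ → MonotoneOn
      (fun W : ℝ => γ * ∫ z in Ioi (0:ℝ), Real.log (1 + g * (W / γ) * z) * Real.exp (-z))
      (Ici 0)) := by
  have hf := concaveOn_expectedLogOneAddMul.comp_const_mul_Ici hg.le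
  have hrate : ∀ γ W : ℝ, γ * expectedLogOneAddMul (g * (γ⁻¹ • W)) =
      γ * expectedLogOneAddMul (g * (W / γ)) := by
    intro γ W; rw [smul_eq_mul, inv_mul_eq_div]
  refine ⟨?_, fun W hW => ?_, fun γ hγ => ?_⟩
  · refine (hf.perspective.subset (fun p (hp : 0 < p.1 ∧ 0 ≤ p.2) => ⟨hp.1, ?_⟩)
      ((convex_Ioi 0).prod (convex_Ici 0))).congr fun p _ => hrate p.1 p.2
    exact smul_nonneg (inv_nonneg.2 hp.1.le) hp.2
  · refine ((hf.monotoneOn_perspective self_mem_Ici (by simp [expectedLogOneAddMul]) W).mono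
      fun γ (hγ : 0 < γ) => ⟨hγ, ?_⟩).congr fun γ _ => hrate γ W
    exact smul_nonneg (inv_nonneg.2 hγ.le) hW
  · intro W₁ (hW₁ : 0 ≤ W₁) W₂ (hW₂ : 0 ≤ W₂) hW
    exact mul_le_mul_of_nonneg_left (monotoneOn_expectedLogOneAddMul
      (mem_Ici.2 (by positivity)) (mem_Ici.2 (by positivity)) (by gcongr)) hγ.le
end
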